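/- arXiv:2105.09797 — 2 statements merged into one kernel-verified Lean document; each statement's English description precedes it below -/
import Mathlib

section
/- For every positive integer n and every graph H, the strong product Kₙ ⊠ H is well-dominated if and only if H is well-dominated. -/
open SimpleGraph

variable {V : Type*}

/-- Closed neighborhood of a vertex. -/
def closedNbhd (G : SimpleGraph V) (v : V) : Set V := insert v (G.neighborSet v)

/-- Closed neighborhood of a set of vertices. -/
def closedNbhdSet (G : SimpleGraph V) (A : Set V) : Set V := ⋃ a ∈ A, closedNbhd G a

/-- `D` is a dominating set of `G`. -/
def IsDomSet (G : SimpleGraph V) (D : Set V) : Prop :=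
  ∀ v, ∃ u ∈ D, v ∈ closedNbhd G u

/-- `D` is a minimal dominating set of `G`. -/
def IsMinimalDomSet (G : SimpleGraph V) (D : Set V) : Prop :=
  IsDomSet G D ∧ ∀ D' ⊆ D, IsDomSet G D' → D' = D

/-- The domination number `γ`. -/
noncomputable def domNum (G : SimpleGraph V) : ℕ :=
  sInf {n | ∃ D : Set V, IsDomSet G D ∧ D.ncard = n}

/-- The upper domination number `Γ`. -/
noncomputable def upperDomNum (G : SimpleGraph V) : ℕ :=
  sSup {n | ∃ D : Set V, IsMinimalDomSet G D ∧ D.ncard = n}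

/-- A graph is well-dominated if `γ = Γ`. -/
def WellDominated (G : SimpleGraph V) : Prop := domNum G = upperDomNum G

/-- `A` is an independent set of `G`. -/
def IsIndep (G : SimpleGraph V) (A : Set V) : Prop :=
  ∀ u ∈ A, ∀ v ∈ A, ¬ G.Adj u v

/-- `A` is a maximal independent set of `G`. -/
def IsMaxIndep (G : SimpleGraph V) (A : Set V) : Prop :=
  IsIndep G A ∧ ∀ B, IsIndep G B → A ⊆ B → B = A

/-- The independence number `α`. -/
noncomputable def indepNum (G : SimpleGraph V) : ℕ :=
  sSup {n | ∃ A : Set V, IsIndep G A ∧ A.ncard = n}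

/-- The strong product of two graphs. -/
def strongProd {α β : Type*} (G : SimpleGraph α) (H : SimpleGraph β) :
    SimpleGraph (α × β) where
  Adj x y := x ≠ y ∧ (x.1 = y.1 ∨ G.Adj x.1 y.1) ∧ (x.2 = y.2 ∨ H.Adj x.2 y.2)
  symm := by
    constructor
    rintro x y ⟨h1, h2, h3⟩
    refine ⟨h1.symm, ?_, ?_⟩
    · cases h2 with
      | inl h => exact Or.inl h.symm
      | inr h => exact Or.inr h.symm
    · cases h3 with
      | inl h => exact Or.inl h.symm
      | inr h => exact Or.inr h.symm
  loopless := by constructor; rintro x ⟨h1, _⟩; exact h1 rfl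

/-- The direct (tensor) product of two graphs. -/
def tensorProd {α β : Type*} (G : SimpleGraph α) (H : SimpleGraph β) :
    SimpleGraph (α × β) where
  Adj x y := G.Adj x.1 y.1 ∧ H.Adj x.2 y.2
  symm := ⟨fun _ _ h => ⟨h.1.symm, h.2.symm⟩⟩
  loopless := ⟨fun _ h => G.irrefl h.1⟩

/-- The corona `G ⊙ K₁`. -/
def corona {α : Type*} (G : SimpleGraph α) : SimpleGraph (α ⊕ α) :=
  SimpleGraph.fromRel (fun x y =>
    match x, y with
    | Sum.inl u, Sum.inl v => G.Adj u v
    | Sum.inl u, Sum.inr v => u = v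
    | _, _ => False)

/-- The private neighborhood `pn[u,D] = N[u] - N[D - {u}]`. -/
def privateNbhd (G : SimpleGraph V) (D : Set V) (u : V) : Set V :=
  {x | x ∈ closedNbhd G u ∧ ∀ d ∈ D, d ≠ u → x ∉ closedNbhd G d}

/-- A set `D` is open irredundant if every vertex of `D` has an external
private neighbor. -/
def IsOpenIrred (G : SimpleGraph V) (D : Set V) : Prop :=
  ∀ u ∈ D, ∃ x ∈ G.neighborSet u, ∀ d ∈ D, d ≠ u → x ∉ closedNbhd G d


/-!
In `Kₙ ⊠ H` the closed neighbourhood of `(a, b)` is `V(Kₙ) × N[b]`, so (for `n > 0`) a set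
dominates `Kₙ ⊠ H` iff its projection dominates `H`. A minimal dominating set of the product
projects injectively onto a minimal dominating set of `H`, and a minimal dominating set of `H`
placed in one layer is minimal in the product. Hence both `γ` and `Γ` agree for the two graphs.
-/

section StrongProdTop

variable {α β : Type*} {H : SimpleGraph β}

lemma mem_closedNbhd_iff {G : SimpleGraph V} {u v : V} :
    v ∈ closedNbhd G u ↔ v = u ∨ G.Adj u v :=
  Iff.rfl

lemma isDomSet_univ (G : SimpleGraph V) : IsDomSet G Set.univ :=
  fun v => ⟨v, Set.mem_univ v, Set.mem_insert v _⟩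

lemma mem_closedNbhd_strongProd_top {u v : α × β} :
    v ∈ closedNbhd (strongProd (⊤ : SimpleGraph α) H) u ↔ v.2 ∈ closedNbhd H u.2 := by
  simp only [mem_closedNbhd_iff, strongProd, top_adj]
  constructor
  · rintro (rfl | ⟨-, -, h | h⟩)
    exacts [Or.inl rfl, Or.inl h.symm, Or.inr h]
  · intro h
    by_cases huv : v = u
    · exact Or.inl huv
    · exact Or.inr ⟨Ne.symm huv, em _, h.imp_left Eq.symm⟩

lemma isDomSet_strongProd_top_iff [Nonempty α] {D : Set (α × β)} :
    IsDomSet (strongProd (⊤ : SimpleGraph α) H) D ↔ IsDomSet H (Prod.snd '' D) := by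
  refine ⟨fun hD b => ?_, fun hS v => ?_⟩
  · obtain ⟨u, hu, hbu⟩ := hD (Classical.arbitrary α, b)
    exact ⟨u.2, Set.mem_image_of_mem _ hu, mem_closedNbhd_strongProd_top.1 hbu⟩
  · obtain ⟨_, ⟨u, hu, rfl⟩, hvu⟩ := hS v.2
    exact ⟨u, hu, mem_closedNbhd_strongProd_top.2 hvu⟩

lemma image_snd_image_mk (a : α) (S : Set β) : Prod.snd '' (Prod.mk a '' S) = S := by
  simp [Set.image_image]

lemma IsMinimalDomSet.injOn_snd [Nonempty α] {D : Set (α × β)}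
    (hD : IsMinimalDomSet (strongProd (⊤ : SimpleGraph α) H) D) : Set.InjOn Prod.snd D := by
  intro u hu v hv huv
  by_contra hne
  have himage : Prod.snd '' (D \ {u}) = Prod.snd '' D := by
    refine (Set.image_mono Set.sdiff_subset).antisymm ?_
    rintro _ ⟨w, hw, rfl⟩
    by_cases hwu : w = u
    · exact ⟨v, ⟨hv, Ne.symm hne⟩, hwu ▸ huv.symm⟩
    · exact ⟨w, ⟨hw, hwu⟩, rfl⟩
  have hdom : IsDomSet (strongProd (⊤ : SimpleGraph α) H) (D \ {u}) := by
    rw [isDomSet_strongProd_top_iff, himage, ← isDomSet_strongProd_top_iff]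
    exact hD.1
  have hu' : u ∈ D \ {u} := (hD.2 _ Set.sdiff_subset hdom).symm ▸ hu
  exact hu'.2 rfl

lemma IsMinimalDomSet.image_snd [Nonempty α] {D : Set (α × β)}
    (hD : IsMinimalDomSet (strongProd (⊤ : SimpleGraph α) H) D) :
    IsMinimalDomSet H (Prod.snd '' D) := by
  refine ⟨isDomSet_strongProd_top_iff.1 hD.1, fun S hS hdom => ?_⟩
  have himage : Prod.snd '' {u ∈ D | u.2 ∈ S} = S := by
    refine Set.Subset.antisymm (fun _ ⟨u, hu, hb⟩ => hb ▸ hu.2) fun b hb => ?_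
    obtain ⟨u, hu, rfl⟩ := hS hb
    exact ⟨u, ⟨hu, hb⟩, rfl⟩
  have hdom' : IsDomSet (strongProd (⊤ : SimpleGraph α) H) {u ∈ D | u.2 ∈ S} := by
    rwa [isDomSet_strongProd_top_iff, himage]
  rw [← himage, hD.2 _ (Set.sep_subset _ _) hdom']

lemma IsMinimalDomSet.image_mk (a : α) {S : Set β} (hS : IsMinimalDomSet H S) :
    IsMinimalDomSet (strongProd (⊤ : SimpleGraph α) H) (Prod.mk a '' S) := by
  have : Nonempty α := ⟨a⟩
  refine ⟨by rw [isDomSet_strongProd_top_iff, image_snd_image_mk]; exact hS.1,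
    fun D hD hdom => hD.antisymm ?_⟩
  have hsnd : Prod.snd '' D = S :=
    hS.2 _ (image_snd_image_mk a S ▸ Set.image_mono hD) (isDomSet_strongProd_top_iff.1 hdom)
  rintro _ ⟨b, hb, rfl⟩
  obtain ⟨w, hw, rfl⟩ := hsnd.symm ▸ hb
  obtain ⟨_, -, rfl⟩ := hD hw
  exact hw

lemma upperDomNum_strongProd_top [Nonempty α] :
    upperDomNum (strongProd (⊤ : SimpleGraph α) H) = upperDomNum H := by
  unfold upperDomNum
  congr 1
  ext m
  constructor
  · rintro ⟨D, hD, rfl⟩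
    exact ⟨_, hD.image_snd, hD.injOn_snd.ncard_image⟩
  · rintro ⟨S, hS, rfl⟩
    exact ⟨_, hS.image_mk (Classical.arbitrary α),
      Set.ncard_image_of_injective _ (Prod.mk_right_injective _)⟩

lemma domNum_strongProd_top [Nonempty α] [Finite α] [Finite β] :
    domNum (strongProd (⊤ : SimpleGraph α) H) = domNum H := by
  unfold domNum
  set A := {m | ∃ D : Set (α × β), IsDomSet (strongProd (⊤ : SimpleGraph α) H) D ∧ D.ncard = m}
  set B := {m | ∃ S : Set β, IsDomSet H S ∧ S.ncard = m}
  have hBA : B ⊆ A := by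
    rintro _ ⟨S, hS, rfl⟩
    refine ⟨Prod.mk (Classical.arbitrary α) '' S, ?_,
      Set.ncard_image_of_injective _ (Prod.mk_right_injective _)⟩
    rwa [isDomSet_strongProd_top_iff, image_snd_image_mk]
  have hAB : ∀ m ∈ A, ∃ k ∈ B, k ≤ m := by
    rintro _ ⟨D, hD, rfl⟩
    exact ⟨_, ⟨_, isDomSet_strongProd_top_iff.1 hD, rfl⟩, Set.ncard_image_le⟩
  have hB : B.Nonempty := ⟨_, Set.univ, isDomSet_univ H, rfl⟩
  obtain ⟨k, hk, hk_le⟩ := hAB _ (Nat.sInf_mem (hB.mono hBA))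
  exact le_antisymm (Nat.sInf_le (hBA (Nat.sInf_mem hB))) ((Nat.sInf_le hk).trans hk_le)

theorem wellDominated_strongProd_top_iff [Nonempty α] [Finite α] [Finite β] :
    WellDominated (strongProd (⊤ : SimpleGraph α) H) ↔ WellDominated H := by
  unfold WellDominated
  rw [domNum_strongProd_top, upperDomNum_strongProd_top]

end StrongProdTop

/-- `Kₙ ⊠ H` is well-dominated iff `H` is well-dominated. -/
theorem stmt_4 {β : Type*} [Fintype β] (n : ℕ) (hn : 0 < n)
    (H : SimpleGraph β) :
    WellDominated (strongProd (⊤ : SimpleGraph (Fin n)) H) ↔ WellDominated H :=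
  have : Nonempty (Fin n) := ⟨⟨0, hn⟩⟩
  wellDominated_strongProd_top_iff
end

section
/- Let G and H be connected graphs each of order at least 3. If the direct product G × H is well-dominated, then every minimum dominating set of G is independent and every minimum dominating set of H is independent. -/
open SimpleGraph

variable {V : Type*}

/-!
Suppose a minimum dominating set `D` of `G` contains adjacent vertices `u` and `v`, and let
`n = |V(H)|`. Since `H` is connected of order at least 3, some vertex `h₀` of `H` is not the only
neighbour of any vertex. Then `D × V(H)` with `(u, h₀)` removed still dominates `G × H`: the
vertex `(u, h₀)` is dominated by some `(v, z)`, and every `(g, y)` with `g` adjacent to `u` by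
some `(u, z)` with `z ≠ h₀`. Hence `γ(G × H) ≤ γ(G) n - 1`. On the other hand, if `I` is a maximal
independent set of `G`, then `I × V(H)` is independent and dominating, hence minimal dominating,
so `Γ(G × H) ≥ |I| n ≥ γ(G) n`. The statement for `H` follows since `G × H ≅ H × G`.
-/

open Set

namespace SimpleGraph

variable {G : SimpleGraph V}

lemma Preconnected.mem_of_forall_adj_mem (hG : G.Preconnected) {S : Set V}
    (hS : ∀ s ∈ S, ∀ t, G.Adj s t → t ∈ S) {u : V} (hu : u ∈ S) (v : V) : v ∈ S :=
  (hG u v).mem_subgraphVerts (H := (⊤ : G.Subgraph).induce S)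
    (fun s hs t hst => ⟨hs, hS s hs t hst, hst⟩) hu

/-- Otherwise two vertices would each be the only neighbour of the other, and so would form a
connected component. -/
lemma Connected.exists_forall_exists_adj_ne [Fintype V] (hG : G.Connected)
    (hcard : 3 ≤ Fintype.card V) : ∃ h₀, ∀ y, ∃ z, G.Adj y z ∧ z ≠ h₀ := by
  have : Nontrivial V := Fintype.one_lt_card_iff_nontrivial.1 (by omega)
  by_contra! hleaf
  obtain ⟨a⟩ := hG.nonempty
  obtain ⟨x, hx⟩ := hleaf a
  obtain ⟨y, hy⟩ := hleaf x
  have hya : y = a := by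
    obtain ⟨z, hyz⟩ := hG.preconnected.exists_adj_of_nontrivial y
    exact hx y (hy z hyz ▸ hyz).symm
  subst hya
  have hpair : ∀ t, t ∈ ({y, x} : Set V) :=
    hG.preconnected.mem_of_forall_adj_mem (by
      rintro s (rfl | rfl) t hst
      · exact Or.inr (hy t hst)
      · exact Or.inl (hx t hst)) (mem_insert y _)
  have : Fintype.card V ≤ 2 := by
    classical
    calc Fintype.card V = Finset.card {y, x} := by
          rw [← Finset.card_univ]; congr; ext t; simpa using hpair t
      _ ≤ 2 := Finset.card_le_two
  omega

end SimpleGraph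

section Domination

variable {W : Type*} {G : SimpleGraph V} {G' : SimpleGraph W}

lemma domNum_le_ncard {D : Set V} (hD : IsDomSet G D) : domNum G ≤ D.ncard :=
  Nat.sInf_le ⟨D, hD, rfl⟩

lemma ncard_le_upperDomNum [Finite V] {D : Set V} (hD : IsMinimalDomSet G D) :
    D.ncard ≤ upperDomNum G :=
  le_csSup ⟨Nat.card V, by rintro _ ⟨E, -, rfl⟩; exact ncard_le_card E⟩ ⟨D, hD, rfl⟩

lemma IsIndep.isMinimalDomSet {I : Set V} (hI : IsIndep G I) (hdom : IsDomSet G I) :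
    IsMinimalDomSet G I := by
  refine ⟨hdom, fun D hDI hD => hDI.antisymm fun x hx => ?_⟩
  obtain ⟨d, hdD, rfl | hdx⟩ := hD x
  · exact hdD
  · exact absurd hdx (hI d (hDI hdD) x hx)

/-- A maximal independent set is dominating. -/
lemma exists_isIndep_isDomSet [Finite V] (G : SimpleGraph V) :
    ∃ I, IsIndep G I ∧ IsDomSet G I := by
  obtain ⟨I, hI, hmax⟩ :=
    (toFinite {I : Set V | IsIndep G I}).exists_maximal ⟨∅, by simp [IsIndep]⟩
  refine ⟨I, hI, fun v => ?_⟩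
  by_contra! hv
  have hvI : IsIndep G (insert v I) := by
    rintro a (rfl | ha) b (rfl | hb) hab
    · exact G.irrefl hab
    · exact hv b hb (Or.inr hab.symm)
    · exact hv a ha (Or.inr hab)
    · exact hI a ha b hb hab
  exact hv v (hmax hvI (subset_insert v I) (mem_insert v I)) (Or.inl rfl)

lemma IsDomSet.image (e : G ≃g G') {D : Set V} (hD : IsDomSet G D) : IsDomSet G' (e '' D) := by
  intro w
  obtain ⟨d, hdD, hd⟩ := hD (e.symm w)
  refine ⟨e d, mem_image_of_mem e hdD, ?_⟩
  rcases hd with hd | hd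
  · exact Or.inl (by rw [← hd, e.apply_symm_apply])
  · exact Or.inr (by simpa using e.map_adj_iff.2 hd)

lemma IsMinimalDomSet.image (e : G ≃g G') {D : Set V} (hD : IsMinimalDomSet G D) :
    IsMinimalDomSet G' (e '' D) := by
  refine ⟨hD.1.image e, fun D' hD'D hD' => ?_⟩
  have hsub : e.symm '' D' ⊆ D := by
    rintro _ ⟨w, hw, rfl⟩
    obtain ⟨d, hd, rfl⟩ := hD'D hw
    simpa using hd
  rw [← hD.2 _ hsub (hD'.image e.symm), image_image]
  simp

lemma setOf_ncard_subset_of_image (e : V ≃ W) {P : Set V → Prop} {Q : Set W → Prop}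
    (h : ∀ D, P D → Q (e '' D)) :
    {n | ∃ D, P D ∧ D.ncard = n} ⊆ {n | ∃ D, Q D ∧ D.ncard = n} :=
  fun _ ⟨D, hD, hn⟩ => ⟨e '' D, h D hD, (ncard_image_of_injective D e.injective).trans hn⟩

lemma WellDominated.of_iso (e : G ≃g G') (h : WellDominated G) : WellDominated G' := by
  have hdom : {n | ∃ D, IsDomSet G D ∧ D.ncard = n} = {n | ∃ D, IsDomSet G' D ∧ D.ncard = n} :=
    (setOf_ncard_subset_of_image e.toEquiv fun _ hD => hD.image e).antisymm
      (setOf_ncard_subset_of_image e.symm.toEquiv fun _ hD => hD.image e.symm)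
  have hmin : {n | ∃ D, IsMinimalDomSet G D ∧ D.ncard = n} =
      {n | ∃ D, IsMinimalDomSet G' D ∧ D.ncard = n} :=
    (setOf_ncard_subset_of_image e.toEquiv fun _ hD => hD.image e).antisymm
      (setOf_ncard_subset_of_image e.symm.toEquiv fun _ hD => hD.image e.symm)
  unfold WellDominated domNum upperDomNum at *
  rwa [← hdom, ← hmin]

end Domination

section TensorProd

variable {α β : Type*} {G : SimpleGraph α} {H : SimpleGraph β}

def tensorProdComm : tensorProd G H ≃g tensorProd H G :=
  { Equiv.prodComm α β with map_rel_iff' := and_comm }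

lemma IsIndep.prod_univ {I : Set α} (hI : IsIndep G I) :
    IsIndep (tensorProd G H) (I ×ˢ univ) :=
  fun x hx y hy hxy => hI x.1 hx.1 y.1 hy.1 hxy.1

lemma IsDomSet.prod_univ {D : Set α} (hD : IsDomSet G D) (hH : ∀ y, ∃ z, H.Adj y z) :
    IsDomSet (tensorProd G H) (D ×ˢ univ) := by
  rintro ⟨g, y⟩
  obtain ⟨d, hdD, rfl | hdg⟩ := hD g
  · exact ⟨(g, y), ⟨hdD, trivial⟩, Or.inl rfl⟩
  · obtain ⟨z, hyz⟩ := hH y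
    exact ⟨(d, z), ⟨hdD, trivial⟩, Or.inr ⟨hdg, hyz.symm⟩⟩

lemma IsDomSet.prod_univ_diff_singleton {D : Set α} (hD : IsDomSet G D) {u v : α} (hu : u ∈ D)
    (hv : v ∈ D) (huv : G.Adj u v) {h₀ : β} (hh₀ : ∀ y, ∃ z, H.Adj y z ∧ z ≠ h₀) :
    IsDomSet (tensorProd G H) (D ×ˢ univ \ {(u, h₀)}) := by
  have hmem : ∀ {d w}, d ∈ D → (d ≠ u ∨ w ≠ h₀) → (d, w) ∈ D ×ˢ univ \ {(u, h₀)} :=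
    fun hd hne => ⟨⟨hd, trivial⟩, by simpa [or_iff_not_imp_left] using hne⟩
  rintro ⟨g, y⟩
  obtain ⟨z, hyz, hz⟩ := hh₀ y
  obtain ⟨d, hdD, rfl | hdg⟩ := hD g
  · by_cases hgu : g = u
    · subst hgu
      exact ⟨(v, z), hmem hv (Or.inl huv.ne'), Or.inr ⟨huv.symm, hyz.symm⟩⟩
    · exact ⟨(g, y), hmem hdD (Or.inl hgu), Or.inl rfl⟩
  · exact ⟨(d, z), hmem hdD (Or.inr hz), Or.inr ⟨hdg, hyz.symm⟩⟩

lemma isIndep_of_wellDominated_tensorProd [Finite α] [Fintype β] (hH : H.Connected)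
    (hβ : 3 ≤ Fintype.card β) (h : WellDominated (tensorProd G H)) {D : Set α}
    (hD : IsDomSet G D) (hDmin : D.ncard = domNum G) : IsIndep G D := by
  rintro u hu v hv huv
  obtain ⟨h₀, hh₀⟩ := hH.exists_forall_exists_adj_ne hβ
  obtain ⟨I, hIind, hIdom⟩ := exists_isIndep_isDomSet G
  have hupper : domNum G * Fintype.card β ≤ upperDomNum (tensorProd G H) :=
    calc domNum G * Fintype.card β ≤ I.ncard * Fintype.card β :=
          Nat.mul_le_mul_right _ (domNum_le_ncard hIdom)
      _ = (I ×ˢ univ).ncard := by rw [ncard_prod, ncard_univ, Nat.card_eq_fintype_card]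
      _ ≤ upperDomNum (tensorProd G H) := ncard_le_upperDomNum <|
          hIind.prod_univ.isMinimalDomSet <| hIdom.prod_univ fun y => (hh₀ y).imp fun _ => And.left
  have hlower : domNum (tensorProd G H) + 1 ≤ domNum G * Fintype.card β :=
    calc domNum (tensorProd G H) + 1 ≤ (D ×ˢ univ \ {(u, h₀)}).ncard + 1 :=
          Nat.succ_le_succ (domNum_le_ncard (hD.prod_univ_diff_singleton hu hv huv hh₀))
      _ = (D ×ˢ univ).ncard := ncard_sdiff_singleton_add_one ⟨hu, trivial⟩ (toFinite _)
      _ = domNum G * Fintype.card β := by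
          rw [ncard_prod, ncard_univ, Nat.card_eq_fintype_card, hDmin]
  unfold WellDominated at h
  omega

end TensorProd

/-- If `G × H` is well-dominated (both factors connected of order `≥ 3`), then
every minimum dominating set of `G` and of `H` is independent. -/
theorem stmt_9 {α β : Type*} [Fintype α] [Fintype β]
    (G : SimpleGraph α) (H : SimpleGraph β)
    (hG : G.Connected) (hH : H.Connected)
    (hα : 3 ≤ Fintype.card α) (hβ : 3 ≤ Fintype.card β)
    (h : WellDominated (tensorProd G H)) :
    (∀ D : Set α, IsDomSet G D → D.ncard = domNum G → IsIndep G D) ∧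
    (∀ D : Set β, IsDomSet H D → D.ncard = domNum H → IsIndep H D) :=
  ⟨fun _ => isIndep_of_wellDominated_tensorProd hH hβ h,
    fun _ => isIndep_of_wellDominated_tensorProd hG hα (h.of_iso tensorProdComm)⟩
end
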